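/- Let a ≥ 0 and let x, y : ℕ → ℝ satisfy 0 ≤ x_m ≤ a^m and 0 ≤ y_n ≤ a^n for all m, n ∈ ℕ. Then Σ ((m̃+ñ)!/(m! n! m̃! ñ!)) x_{m−1} y_{n−1} ≤ 4 e^{4a}, where the sum runs over all (m, n, m̃, ñ) ∈ ℕ⁴ with m ≥ 1, n ≥ 1 and m + n = m̃ + ñ (in particular the family is summable). -/
import Mathlib


/-- The summand of Lemma D.5, doubly shifted case: for a quadruple `(m, n, m̃, ñ)`,
`((m̃+ñ)! / (m! n! m̃! ñ!)) * x (m-1) * y (n-1)`. -/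
noncomputable def summandD5shift2 (x y : ℕ → ℝ) (q : ℕ × ℕ × ℕ × ℕ) : ℝ :=
  ((q.2.2.1 + q.2.2.2).factorial : ℝ) /
    ((q.1.factorial : ℝ) * (q.2.1.factorial : ℝ) * (q.2.2.1.factorial : ℝ) *
      (q.2.2.2.factorial : ℝ)) * x (q.1 - 1) * y (q.2.1 - 1)

open Function

-- majorant
noncomputable def Fmaj (a : ℝ) (p : (ℕ × ℕ) × ℕ) : ℝ :=
  (((p.1.1 + p.1.2 + 2).choose p.2 : ℝ)) *
    (a ^ p.1.1 * a ^ p.1.2 / ((p.1.1 + 1).factorial * (p.1.2 + 1).factorial))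

lemma Fmaj_nonneg (a : ℝ) (ha : 0 ≤ a) (p : (ℕ × ℕ) × ℕ) : 0 ≤ Fmaj a p := by
  unfold Fmaj; positivity

noncomputable def hmaj (a : ℝ) (m : ℕ) : ℝ := 2 ^ (m + 1) * a ^ m / (m + 1).factorial

lemma hmaj_nonneg (a : ℝ) (ha : 0 ≤ a) (m : ℕ) : 0 ≤ hmaj a m := by
  unfold hmaj; positivity

lemma hmaj_le (a : ℝ) (ha : 0 ≤ a) (m : ℕ) : hmaj a m ≤ 2 * ((2 * a) ^ m / m.factorial) := by
  unfold hmaj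
  rw [mul_pow, pow_succ]
  rw [div_le_iff₀ (by positivity)]
  have h1 : (m.factorial : ℝ) ≤ ((m + 1).factorial : ℝ) := by
    exact_mod_cast Nat.factorial_le (Nat.le_succ m)
  have h2 : (0:ℝ) < m.factorial := by exact_mod_cast m.factorial_pos
  calc 2 ^ m * 2 * a ^ m = 2 * (2 ^ m * a ^ m) := by ring
    _ ≤ 2 * (2 ^ m * a ^ m) / m.factorial * (m+1).factorial := by
        rw [div_mul_eq_mul_div, le_div_iff₀ h2]
        have : (0:ℝ) ≤ 2 * (2 ^ m * a ^ m) := by positivity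
        calc 2 * (2 ^ m * a ^ m) * m.factorial ≤ 2 * (2 ^ m * a ^ m) * (m+1).factorial :=
              mul_le_mul_of_nonneg_left h1 this
          _ = 2 * (2 ^ m * a ^ m) * (m+1).factorial := rfl
    _ = 2 * (2 ^ m * a ^ m / m.factorial) * (m+1).factorial := by ring

lemma hmaj_summable (a : ℝ) (ha : 0 ≤ a) : Summable (hmaj a) :=
  Summable.of_nonneg_of_le (hmaj_nonneg a ha) (hmaj_le a ha)
    ((Real.summable_pow_div_factorial (2 * a)).mul_left 2)

lemma tsum_pow_div_factorial (c : ℝ) : ∑' n : ℕ, c ^ n / n.factorial = Real.exp c := by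
  rw [Real.exp_eq_exp_ℝ, NormedSpace.exp_eq_tsum_div]

lemma hmaj_tsum_le (a : ℝ) (ha : 0 ≤ a) : ∑' m, hmaj a m ≤ 2 * Real.exp (2 * a) := by
  have := Summable.tsum_le_tsum (hmaj_le a ha) (hmaj_summable a ha)
    ((Real.summable_pow_div_factorial (2 * a)).mul_left 2)
  calc ∑' m, hmaj a m ≤ ∑' m, 2 * ((2 * a) ^ m / m.factorial) := this
    _ = 2 * ∑' m, (2 * a) ^ m / m.factorial := tsum_mul_left
    _ = 2 * Real.exp (2 * a) := by rw [tsum_pow_div_factorial]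

-- inner sum over k
lemma Fmaj_inner_summable (a : ℝ) (m n : ℕ) :
    Summable (fun k => Fmaj a ((m, n), k)) := by
  apply summable_of_ne_finset_zero (s := Finset.range (m + n + 3))
  intro k hk
  simp only [Finset.mem_range, not_lt] at hk
  unfold Fmaj
  simp [Nat.choose_eq_zero_of_lt (by omega : m + n + 2 < k)]

lemma Fmaj_inner_tsum (a : ℝ) (ha : 0 ≤ a) (m n : ℕ) :
    ∑' k, Fmaj a ((m, n), k) = hmaj a m * hmaj a n := by
  rw [tsum_eq_sum (s := Finset.range (m + n + 3)) (by
    intro k hk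
    simp only [Finset.mem_range, not_lt] at hk
    unfold Fmaj
    simp [Nat.choose_eq_zero_of_lt (by omega : m + n + 2 < k)])]
  unfold Fmaj hmaj
  simp only
  rw [← Finset.sum_mul]
  have : (∑ k ∈ Finset.range (m + n + 3), ((m + n + 2).choose k : ℝ)) = 2 ^ (m + n + 2) := by
    have := Nat.sum_range_choose (m + n + 2)
    exact_mod_cast congrArg (Nat.cast (R := ℝ)) this
  rw [this]
  have h1 : ((m+1).factorial : ℝ) ≠ 0 := by exact_mod_cast (m+1).factorial_ne_zero
  have h2 : ((n+1).factorial : ℝ) ≠ 0 := by exact_mod_cast (n+1).factorial_ne_zero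
  field_simp
  ring

lemma Fmaj_summable (a : ℝ) (ha : 0 ≤ a) : Summable (Fmaj a) := by
  rw [summable_prod_of_nonneg (fun p => Fmaj_nonneg a ha p)]
  refine ⟨fun mn => Fmaj_inner_summable a mn.1 mn.2, ?_⟩
  have : (fun mn : ℕ × ℕ => ∑' k, Fmaj a (mn, k)) = fun mn => hmaj a mn.1 * hmaj a mn.2 := by
    funext mn; exact Fmaj_inner_tsum a ha mn.1 mn.2
  rw [this]
  exact (hmaj_summable a ha).mul_of_nonneg (hmaj_summable a ha)
    (hmaj_nonneg a ha) (hmaj_nonneg a ha)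

lemma Fmaj_tsum_le (a : ℝ) (ha : 0 ≤ a) : ∑' p, Fmaj a p ≤ 4 * Real.exp (4 * a) := by
  have hsum := Fmaj_summable a ha
  rw [Summable.tsum_prod (by exact hsum)]
  have : (fun mn : ℕ × ℕ => ∑' k, Fmaj a (mn, k)) = fun mn => hmaj a mn.1 * hmaj a mn.2 := by
    funext mn; exact Fmaj_inner_tsum a ha mn.1 mn.2
  simp_rw [this]
  have hprod : Summable (fun mn : ℕ × ℕ => hmaj a mn.1 * hmaj a mn.2) :=
    (hmaj_summable a ha).mul_of_nonneg (hmaj_summable a ha) (hmaj_nonneg a ha) (hmaj_nonneg a ha)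
  rw [Summable.tsum_prod hprod]
  simp_rw [tsum_mul_left]
  rw [tsum_mul_right]
  have hb := hmaj_tsum_le a ha
  have hnn : 0 ≤ ∑' m, hmaj a m := tsum_nonneg (hmaj_nonneg a ha)
  calc (∑' m, hmaj a m) * (∑' n, hmaj a n) ≤ (2 * Real.exp (2*a)) * (2 * Real.exp (2*a)) :=
        mul_le_mul hb hb hnn (by positivity)
    _ = 4 * Real.exp (4 * a) := by
        have : Real.exp (2*a) * Real.exp (2*a) = Real.exp (4*a) := by
          rw [← Real.exp_add]; ring_nf
        calc 2 * Real.exp (2*a) * (2 * Real.exp (2*a))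
            = 4 * (Real.exp (2*a) * Real.exp (2*a)) := by ring
          _ = 4 * Real.exp (4*a) := by rw [this]

lemma summand_le_Fmaj (a : ℝ) (ha : 0 ≤ a) (x y : ℕ → ℝ)
    (hx0 : ∀ m, 0 ≤ x m) (hxa : ∀ m, x m ≤ a ^ m)
    (hy0 : ∀ n, 0 ≤ y n) (hya : ∀ n, y n ≤ a ^ n)
    (m n mt nt : ℕ) (hm : 1 ≤ m) (hn : 1 ≤ n) (hc : m + n = mt + nt) :
    summandD5shift2 x y (m, n, mt, nt) ≤ Fmaj a ((m - 1, n - 1), mt) := by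
  unfold summandD5shift2 Fmaj
  simp only
  have h2 : m - 1 + 1 = m := by omega
  have h3 : n - 1 + 1 = n := by omega
  have h1 : m - 1 + (n - 1) + 2 = mt + nt := by omega
  rw [h1, h2, h3]
  have hA : (0:ℝ) < m.factorial := by exact_mod_cast m.factorial_pos
  have hB : (0:ℝ) < n.factorial := by exact_mod_cast n.factorial_pos
  have hM : (0:ℝ) < mt.factorial := by exact_mod_cast mt.factorial_pos
  have hNt : (0:ℝ) < nt.factorial := by exact_mod_cast nt.factorial_pos
  have key : ((mt+nt).factorial : ℝ) =
      ((mt+nt).choose mt : ℝ) * mt.factorial * nt.factorial := by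
    have h5 := Nat.choose_mul_factorial_mul_factorial (Nat.le_add_right mt nt)
    have h4 : mt + nt - mt = nt := by omega
    rw [h4] at h5
    exact_mod_cast h5.symm
  rw [key]
  have e1 : ((mt+nt).choose mt : ℝ) * mt.factorial * nt.factorial /
      ((m.factorial : ℝ) * n.factorial * mt.factorial * nt.factorial)
      = ((mt+nt).choose mt : ℝ) / ((m.factorial : ℝ) * n.factorial) := by
    field_simp
  rw [e1]
  have hC : (0:ℝ) ≤ ((mt+nt).choose mt : ℝ) / ((m.factorial : ℝ) * n.factorial) := by positivity
  calc ((mt+nt).choose mt : ℝ) / ((m.factorial : ℝ) * n.factorial) * x (m-1) * y (n-1)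
      ≤ ((mt+nt).choose mt : ℝ) / ((m.factorial : ℝ) * n.factorial) * a^(m-1) * a^(n-1) :=
        mul_le_mul (mul_le_mul_of_nonneg_left (hxa (m-1)) hC) (hya (n-1)) (hy0 _)
          (by positivity)
    _ = ((mt+nt).choose mt : ℝ) * (a^(m-1) * a^(n-1) /
          ((m.factorial : ℝ) * n.factorial)) := by ring

/-- Lemma D.5 ('summation'), doubly shifted case: if `0 ≤ x m ≤ a^m` and `0 ≤ y n ≤ a^n`,
then `∑ ((m̃+ñ)!/(m! n! m̃! ñ!)) x_{m-1} y_{n-1} ≤ 4 e^{4a}`, the sum over quadruples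
with `m ≥ 1`, `n ≥ 1` and `m + n = m̃ + ñ`. -/
theorem summation_lemma_shift2 (a : ℝ) (ha : 0 ≤ a) (x y : ℕ → ℝ)
    (hx0 : ∀ m, 0 ≤ x m) (hxa : ∀ m, x m ≤ a ^ m)
    (hy0 : ∀ n, 0 ≤ y n) (hya : ∀ n, y n ≤ a ^ n) :
    Summable (fun q : {q : ℕ × ℕ × ℕ × ℕ //
        1 ≤ q.1 ∧ 1 ≤ q.2.1 ∧ q.1 + q.2.1 = q.2.2.1 + q.2.2.2} =>
      summandD5shift2 x y q.1) ∧
    ∑' q : {q : ℕ × ℕ × ℕ × ℕ //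
        1 ≤ q.1 ∧ 1 ≤ q.2.1 ∧ q.1 + q.2.1 = q.2.2.1 + q.2.2.2},
      summandD5shift2 x y q.1 ≤ 4 * Real.exp (4 * a) := by
  set S := {q : ℕ × ℕ × ℕ × ℕ //
      1 ≤ q.1 ∧ 1 ≤ q.2.1 ∧ q.1 + q.2.1 = q.2.2.1 + q.2.2.2}
  let e : S → (ℕ × ℕ) × ℕ := fun q => ((q.1.1 - 1, q.1.2.1 - 1), q.1.2.2.1)
  have he : Injective e := by
    rintro ⟨⟨m, n, mt, nt⟩, hm, hn, hc⟩ ⟨⟨m', n', mt', nt'⟩, hm', hn', hc'⟩ h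
    simp only [e, Prod.mk.injEq] at h
    obtain ⟨⟨h1, h2⟩, h3⟩ := h
    apply Subtype.ext
    simp only [Prod.mk.injEq]
    simp only at hm hn hc hm' hn' hc'
    omega
  have hle : ∀ q : S, summandD5shift2 x y q.1 ≤ Fmaj a (e q) := by
    rintro ⟨⟨m, n, mt, nt⟩, hm, hn, hc⟩
    exact summand_le_Fmaj a ha x y hx0 hxa hy0 hya m n mt nt hm hn hc
  have hnn : ∀ q : S, 0 ≤ summandD5shift2 x y q.1 := by
    rintro ⟨⟨m, n, mt, nt⟩, hm, hn, hc⟩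
    unfold summandD5shift2
    simp only
    have := hx0 (m - 1)
    have := hy0 (n - 1)
    positivity
  have hFs := Fmaj_summable a ha
  have hsum : Summable (fun q : S => summandD5shift2 x y q.1) :=
    Summable.of_nonneg_of_le hnn hle (hFs.comp_injective he)
  refine ⟨hsum, ?_⟩
  calc ∑' q : S, summandD5shift2 x y q.1 ≤ ∑' p, Fmaj a p :=
        Summable.tsum_le_tsum_of_inj e he (fun c _ => Fmaj_nonneg a ha c) hle hsum hFs
    _ ≤ 4 * Real.exp (4 * a) := Fmaj_tsum_le a ha
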